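/- In the symmetric group S_n, the minimal-length elements of the conjugacy class of a Coxeter element are exactly the Coxeter elements, and every Coxeter element has length n − 1. -/

import Mathlib

/-!
Let the `i`-th simple reflection act on `ℕ` as the transposition `(i, i + 1)`. A Coxeter element
then acts transitively on `{0, …, r}` (adding the transpositions one at a time, each new one
attaches a new point to the cycle through `0`), and so does every conjugate of it, since the whole
group preserves `{0, …, r}`. An element with a word that omits `s_i` preserves `{0, …, i}`, so it
is not transitive. Hence every word for a conjugate of a Coxeter element contains all `r` simple
reflections: its length is at least `r`, with equality exactly when some reduced word uses each
simple reflection once, i.e. for the Coxeter elements.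
-/

open Equiv Equiv.Perm MulAction
open scoped Pointwise

theorem List.card_le_length_of_forall_mem {α : Type*} [Fintype α] {l : List α}
    (h : ∀ a, a ∈ l) : Fintype.card α ≤ l.length := by
  simpa using Fintype.card_le_of_surjective l.get (List.get_surjective_iff.2 h)

theorem List.nodup_of_forall_mem_of_length_le {α : Type*} [Fintype α] {l : List α}
    (h : ∀ a, a ∈ l) (hl : l.length ≤ Fintype.card α) : l.Nodup := by
  refine List.nodup_iff_injective_get.2 ((Fintype.bijective_iff_surjective_and_card _).2
    ⟨List.get_surjective_iff.2 h, ?_⟩).1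
  have := List.card_le_length_of_forall_mem h
  simp only [Fintype.card_fin]
  omega

namespace Equiv.Perm

variable {α : Type*}

theorem SameCycle.rel_of_forall_rel_apply {σ : Perm α} {R : α → α → Prop} (hR : Equivalence R)
    (h : ∀ y, R y (σ y)) {x y : α} (hxy : σ.SameCycle x y) : R x y := by
  obtain ⟨k, rfl⟩ := hxy
  induction k using Int.induction_on with
  | zero => exact hR.refl x
  | succ n ih =>
    rw [add_comm, zpow_one_add, mul_apply]
    exact hR.trans ih (h _)
  | pred n ih =>
    rw [sub_eq_neg_add, zpow_add, zpow_neg_one, mul_apply]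
    exact hR.trans ih (hR.symm (by simpa using h (σ⁻¹ ((σ ^ (-(n : ℤ))) x))))

theorem SameCycle.swap_mul_of_apply_eq_self [DecidableEq α] {σ : Perm α} {u p x y : α}
    (hp : σ p = p) (hxy : σ.SameCycle x y) : (swap u p * σ).SameCycle x y := by
  set τ := swap u p * σ
  refine hxy.rel_of_forall_rel_apply (SameCycle.equivalence τ) fun z => ?_
  by_cases hzu : σ z = u
  · have : τ (τ z) = σ z := by simp [τ, hzu, hp]
    rw [← this, sameCycle_apply_right, sameCycle_apply_right]
  by_cases hzp : σ z = p
  · rw [σ.injective (hzp.trans hp.symm), hp]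
  · have : τ z = σ z := by simp [τ, swap_apply_of_ne_of_ne hzu hzp]
    rw [← this, sameCycle_apply_right]

theorem swap_mul_swap_pow_three [DecidableEq α] {a b c : α} (hab : a ≠ b) (hac : a ≠ c)
    (hbc : b ≠ c) : (swap a b * swap b c) ^ 3 = 1 := by
  have h₁ : swap a b * swap b c * swap a b = swap a c := by
    simpa [swap_apply_of_ne_of_ne hac.symm hbc.symm] using (swap_apply_apply (swap a b) b c).symm
  have h₂ : swap b c * swap a b * swap b c = swap a c := by
    simpa [swap_apply_of_ne_of_ne hab hac] using (swap_apply_apply (swap b c) a b).symm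
  calc (swap a b * swap b c) ^ 3
      = (swap a b * swap b c * swap a b) * (swap b c * swap a b * swap b c) := by
        simp only [pow_three, mul_assoc]
    _ = 1 := by rw [h₁, h₂, swap_mul_self]

theorem not_sameCycle_of_mem_stabilizer {σ : Perm α} {s : Set α}
    (hσ : σ ∈ stabilizer (Perm α) s) {x y : α} (hx : x ∈ s) (hy : y ∉ s) : ¬σ.SameCycle x y := by
  rintro ⟨k, rfl⟩
  exact hy ((mem_stabilizer_set.1 (zpow_mem hσ k) x).2 hx)

end Equiv.Perm

def adjSwap (j : ℕ) : Perm ℕ := swap j (j + 1)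

theorem adjSwap_mem_stabilizer_Iic {i j : ℕ} (h : j ≠ i) :
    adjSwap j ∈ stabilizer (Perm ℕ) (Set.Iic i) := by
  refine mem_stabilizer_set.2 fun x => ?_
  simp only [adjSwap, Perm.smul_def, swap_apply_def, Set.mem_Iic]
  split_ifs <;> omega

theorem prod_map_adjSwap_mem_stabilizer_Iic {L : List ℕ} {i : ℕ} (h : ∀ j ∈ L, j ≠ i) :
    (L.map adjSwap).prod ∈ stabilizer (Perm ℕ) (Set.Iic i) :=
  Subgroup.list_prod_mem _ (List.forall_mem_map.2 fun j hj => adjSwap_mem_stabilizer_Iic (h j hj))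

theorem prod_map_adjSwap_apply_of_forall_lt {L : List ℕ} {n : ℕ} (h : ∀ j ∈ L, j + 1 < n) :
    (L.map adjSwap).prod n = n := by
  refine mem_stabilizer_iff.1
    (Subgroup.list_prod_mem (stabilizer (Perm ℕ) n) (List.forall_mem_map.2 fun j hj => ?_))
  have := h j hj
  rw [mem_stabilizer_iff, Perm.smul_def, adjSwap, swap_apply_of_ne_of_ne] <;> omega

theorem sameCycle_prod_map_adjSwap_of_perm_range {m : ℕ} {L : List ℕ}
    (hL : L.Perm (List.range m)) {x : ℕ} (hx : x ≤ m) : (L.map adjSwap).prod.SameCycle x 0 := by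
  induction m generalizing L x with
  | zero => rw [Nat.le_zero.1 hx]
  | succ m ih =>
    obtain ⟨A, B, rfl⟩ := List.append_of_mem (hL.mem_iff.2 (List.mem_range.2 m.lt_succ_self))
    have hAB : (A ++ B).Perm (List.range m) := List.Perm.cons_inv <| List.perm_middle.symm.trans <|
      hL.trans (List.range_succ ▸ List.perm_append_singleton m (List.range m))
    have hA : ∀ j ∈ A, j < m := fun j hj => List.mem_range.1 (hAB.subset (List.mem_append_left B hj))
    have hB : ∀ j ∈ B, j < m := fun j hj => List.mem_range.1 (hAB.subset (List.mem_append_right A hj))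
    set PA := (A.map adjSwap).prod
    set PB := (B.map adjSwap).prod
    have hPA : PA (m + 1) = m + 1 :=
      prod_map_adjSwap_apply_of_forall_lt fun j hj => Nat.succ_lt_succ (hA j hj)
    have hP : (PA * PB) (m + 1) = m + 1 := by
      rw [mul_apply, prod_map_adjSwap_apply_of_forall_lt fun j hj => Nat.succ_lt_succ (hB j hj), hPA]
    have hPA_le : PA m ≤ m :=
      (mem_stabilizer_set.1 (prod_map_adjSwap_mem_stabilizer_Iic fun j hj => (hA j hj).ne) m).2
        Set.self_mem_Iic
    have hIH : ∀ y ≤ m, (PA * PB).SameCycle y 0 := by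
      simpa [List.prod_append] using fun y => ih hAB (x := y)
    -- conjugating `(m, m + 1)` past `PA` turns it into `(PA m, m + 1)`, which attaches the new
    -- point `m + 1` to the cycle of `PA * PB` through `{0, …, m}`
    have hprod : ((A ++ m :: B).map adjSwap).prod = swap (PA m) (m + 1) * (PA * PB) := by
      rw [List.map_append, List.prod_append, List.map_cons, List.prod_cons, ← hPA,
        swap_apply_apply]
      change PA * (swap m (m + 1) * PB) = _
      group
    rw [hprod]
    rcases hx.lt_or_eq with hx | rfl
    · exact (hIH x (by omega)).swap_mul_of_apply_eq_self hP
    · rw [← sameCycle_apply_left, mul_apply, hP, swap_apply_right]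
      exact (hIH _ hPA_le).swap_mul_of_apply_eq_self hP

theorem CoxeterMatrix.A_isLiftable_adjSwap (r : ℕ) :
    (CoxeterMatrix.A r).IsLiftable fun i => adjSwap i := by
  intro i j
  change (adjSwap i * adjSwap j) ^
    (if i = j then 1 else if (j : ℕ) + 1 = i ∨ (i : ℕ) + 1 = j then 3 else 2) = 1
  split_ifs with hij hadj
  · simp [hij, adjSwap]
  · rcases hadj with h | h
    · rw [adjSwap, adjSwap, ← h, swap_comm, swap_comm (j : ℕ)]
      exact swap_mul_swap_pow_three (by omega) (by omega) (by omega)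
    · rw [adjSwap, adjSwap, ← h]
      exact swap_mul_swap_pow_three (by omega) (by omega) (by omega)
  · have hne : (i : ℕ) ≠ j := Fin.val_ne_of_ne hij
    rw [adjSwap, adjSwap, (disjoint_swap_swap (by simp; omega)).commute.mul_pow, sq, sq,
      swap_mul_self, swap_mul_self, one_mul]

namespace CoxeterSystem

section General

variable {B W : Type*} [Group W] {M : CoxeterMatrix B} (cs : CoxeterSystem M W)

def IsCoxeterElement (c : W) : Prop :=
  ∃ l : List B, l.Nodup ∧ (∀ i, i ∈ l) ∧ c = cs.wordProd l

variable [Fintype B] {cs}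

theorem IsCoxeterElement.length_le {c : W} (hc : cs.IsCoxeterElement c) :
    cs.length c ≤ Fintype.card B := by
  obtain ⟨l, hnd, -, rfl⟩ := hc
  exact (cs.length_wordProd_le l).trans hnd.length_le_card

theorem card_le_length_of_forall_mem {w : W} (h : ∀ l, w = cs.wordProd l → ∀ i, i ∈ l) :
    Fintype.card B ≤ cs.length w := by
  obtain ⟨l, hl, rfl⟩ := cs.exists_isReduced w
  rw [hl.eq]
  exact List.card_le_length_of_forall_mem (h l rfl)

theorem isCoxeterElement_of_forall_mem {w : W} (h : ∀ l, w = cs.wordProd l → ∀ i, i ∈ l)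
    (hw : cs.length w ≤ Fintype.card B) : cs.IsCoxeterElement w := by
  obtain ⟨l, hl, rfl⟩ := cs.exists_isReduced w
  exact ⟨l, List.nodup_of_forall_mem_of_length_le (h l rfl) (hl.eq ▸ hw), h l rfl, rfl⟩

end General

variable {r : ℕ} {W : Type*} [Group W] (cs : CoxeterSystem (CoxeterMatrix.A r) W)

/-- The standard action of `S_{r+1}` on `{0, …, r}`, extended to `ℕ` by the identity. -/
def swapRep : W →* Perm ℕ :=
  cs.lift ⟨fun i => adjSwap i, CoxeterMatrix.A_isLiftable_adjSwap r⟩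

theorem swapRep_wordProd (l : List (Fin r)) :
    cs.swapRep (cs.wordProd l) = ((l.map Fin.val).map adjSwap).prod := by
  simp [swapRep, wordProd, map_list_prod, Function.comp_def]

theorem swapRep_wordProd_mem_stabilizer_Iic {l : List (Fin r)} {i : ℕ}
    (h : ∀ j ∈ l, (j : ℕ) ≠ i) : cs.swapRep (cs.wordProd l) ∈ stabilizer (Perm ℕ) (Set.Iic i) := by
  rw [swapRep_wordProd]
  exact prod_map_adjSwap_mem_stabilizer_Iic (List.forall_mem_map.2 h)

theorem swapRep_mem_stabilizer_Iic (w : W) : cs.swapRep w ∈ stabilizer (Perm ℕ) (Set.Iic r) := by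
  obtain ⟨l, rfl⟩ := cs.wordProd_surjective w
  exact cs.swapRep_wordProd_mem_stabilizer_Iic fun j _ => j.isLt.ne

variable {cs}

theorem IsCoxeterElement.sameCycle_swapRep {c : W} (hc : cs.IsCoxeterElement c) {x y : ℕ}
    (hx : x ≤ r) (hy : y ≤ r) : (cs.swapRep c).SameCycle x y := by
  obtain ⟨l, hnd, hall, rfl⟩ := hc
  have hperm : (l.map Fin.val).Perm (List.range r) := by
    rw [← List.map_coe_finRange_eq_range]
    exact ((List.perm_ext_iff_of_nodup hnd (List.nodup_finRange r)).2 (by simp [hall])).map _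
  rw [swapRep_wordProd]
  exact (sameCycle_prod_map_adjSwap_of_perm_range hperm hx).trans
    (sameCycle_prod_map_adjSwap_of_perm_range hperm hy).symm

theorem IsCoxeterElement.sameCycle_swapRep_of_isConj {c w : W} (hc : cs.IsCoxeterElement c)
    (hw : IsConj c w) {x y : ℕ} (hx : x ≤ r) (hy : y ≤ r) : (cs.swapRep w).SameCycle x y := by
  obtain ⟨g, rfl⟩ := isConj_iff.1 hw
  have hg := mem_stabilizer_set.1 (cs.swapRep_mem_stabilizer_Iic g⁻¹)
  rw [map_mul, map_mul, map_inv, sameCycle_conj, ← map_inv]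
  exact hc.sameCycle_swapRep ((hg x).2 hx) ((hg y).2 hy)

theorem IsCoxeterElement.mem_of_isConj {c w : W} (hc : cs.IsCoxeterElement c) (hw : IsConj c w)
    (l : List (Fin r)) (hl : w = cs.wordProd l) (i : Fin r) : i ∈ l := by
  by_contra hi
  subst hl
  have hstab := cs.swapRep_wordProd_mem_stabilizer_Iic (i := i) fun j hj hji =>
    hi (Fin.ext hji ▸ hj)
  exact not_sameCycle_of_mem_stabilizer hstab (Nat.zero_le _) (by simp)
    (hc.sameCycle_swapRep_of_isConj hw (Nat.zero_le r) le_rfl)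

theorem IsCoxeterElement.le_length_of_isConj {c w : W} (hc : cs.IsCoxeterElement c)
    (hw : IsConj c w) : r ≤ cs.length w := by
  simpa using card_le_length_of_forall_mem (hc.mem_of_isConj hw)

end CoxeterSystem

/-- In the symmetric group (the Coxeter group of type `A_r`), every Coxeter element (a product
of all the simple reflections, each appearing exactly once, in some order) has length `r`
(`= n − 1` for `Sₙ`), and the minimal-length elements of the conjugacy class of a Coxeter
element are exactly the Coxeter elements. -/
theorem stmt_19 (r : ℕ) {W : Type*} [Group W]
    (cs : CoxeterSystem (CoxeterMatrix.Aₙ r) W) (c : W)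
    (hc : ∃ l : List (Fin r), l.Nodup ∧ (∀ i, i ∈ l) ∧ c = cs.wordProd l) :
    cs.length c = r ∧
    ∀ w : W, IsConj c w →
      ((∀ v : W, IsConj w v → cs.length w ≤ cs.length v) ↔
        ∃ l : List (Fin r), l.Nodup ∧ (∀ i, i ∈ l) ∧ w = cs.wordProd l) := by
  have hc' : cs.IsCoxeterElement c := hc
  have hcr : cs.length c = r := le_antisymm (by simpa using hc'.length_le)
    (hc'.le_length_of_isConj (IsConj.refl c))
  refine ⟨hcr, fun w hw => ⟨fun hmin => ?_, fun (hw' : cs.IsCoxeterElement w) v hv => ?_⟩⟩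
  · exact CoxeterSystem.isCoxeterElement_of_forall_mem (hc'.mem_of_isConj hw)
      (by simpa [hcr] using hmin c hw.symm)
  · have hwr : cs.length w ≤ r := by simpa using hw'.length_le
    exact hwr.trans (hc'.le_length_of_isConj (hw.trans hv))
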